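/- arXiv:2008.12411 — 2 statements merged into one kernel-verified Lean document; each statement's English description precedes it below -/
import Mathlib

section
/- Define 𝔔_{α,F,C}(u,v) = ∫_{[0,u]×[0,v]} 𝔠_{α,F,C}(s,t) dλ^{d+1}(s,t). Then for all n ∈ ℕ₀ and all (u,v) with u ∈ (F(n-1), F(n)], one has 𝔔_{α,F,C}(u,v) = Σ_{k=0}^{n-1} ∂₁C(F_α(k), v)·P(N = k) + ∂₁C(F_α(n), v)·(u − F(n−1)), where P(N = k) = F(k) − F(k−1). -/
open MeasureTheory Set Filter

/-- `F(n-1)` with the convention `F(-1) = 0`. -/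
noncomputable def Fm (F : ℕ → ℝ) : ℕ → ℝ := fun n => if n = 0 then 0 else F (n - 1)

/-- `F_α(n) = (1-α) F(n-1) + α F(n)`. -/
noncomputable def Falpha (α : ℝ) (F : ℕ → ℝ) (n : ℕ) : ℝ :=
  (1 - α) * Fm F n + α * F n

/-- `⌈u⌉_{α,F} = Σ_{n ≥ 0} F_α(n) · 1_{(F(n-1), F(n)]}(u)`, with `⌈0⌉ = 0` automatic. -/
noncomputable def ceilT (α : ℝ) (F : ℕ → ℝ) (u : ℝ) : ℝ :=
  ∑' n : ℕ, Falpha α F n * Set.indicator (Set.Ioc (Fm F n) (F n)) (fun _ => (1 : ℝ)) u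

/-- `𝔔_{α,F,C}(u,v) = ∫_{[0,u]×[0,v]} c(⌈s⌉_{α,F}, t) dλ^{d+1}(s,t)`,
the distribution function of the transformed density. -/
noncomputable def Qbox (d : ℕ) (α : ℝ) (F : ℕ → ℝ) (c : ℝ → (Fin d → ℝ) → ℝ)
    (u : ℝ) (v : Fin d → ℝ) : ℝ :=
  ∫ p in (Set.Icc (0 : ℝ) u) ×ˢ (Set.Icc (0 : Fin d → ℝ) v), c (ceilT α F p.1) p.2

/-!
On the slab `(F(n-1), F(n)] × [0,v]` the integrand `c(⌈s⌉, t)` does not depend on `s`, so the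
slab contributes `∫_{[0,v]} c(F_α(n), t) dt` times its width. Cutting `(0,u]` at the points
`F(0) ≤ F(1) ≤ …` and summing the slabs gives the formula; the segment `{0} × [0,v]` is null.
-/

section SetIntegralProd

variable {β E : Type*} [MeasureSpace β]
  [NormedAddCommGroup E] [NormedSpace ℝ E]

theorem setIntegral_Icc_prod_eq_Ioc_prod (f : ℝ × β → E) (a b : ℝ) (T : Set β) :
    ∫ p in Icc a b ×ˢ T, f p = ∫ p in Ioc a b ×ˢ T, f p := by
  refine setIntegral_congr_set ?_
  rw [Measure.volume_eq_prod]
  exact Measure.set_prod_ae_eq Ioc_ae_eq_Icc.symm (ae_eq_refl T)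

theorem setIntegral_Ioc_prod_union {f : ℝ × β → E} {a b c : ℝ} {T : Set β}
    (hT : MeasurableSet T) (hab : a ≤ b) (hbc : b ≤ c)
    (hf : IntegrableOn f (Ioc a c ×ˢ T)) :
    ∫ p in Ioc a c ×ˢ T, f p = (∫ p in Ioc a b ×ˢ T, f p) + ∫ p in Ioc b c ×ˢ T, f p := by
  rw [← Ioc_union_Ioc_eq_Ioc hab hbc, union_prod] at hf ⊢
  exact setIntegral_union ((Ioc_disjoint_Ioc_of_le le_rfl).set_prod_left T T)
    (measurableSet_Ioc.prod hT) (hf.mono_set subset_union_left)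
    (hf.mono_set subset_union_right)

theorem setIntegral_Ioc_prod_of_eqOn_snd [SFinite (volume : Measure β)] {f : ℝ × β → ℝ}
    {g : β → ℝ} {a b : ℝ} {T : Set β}
    (hT : MeasurableSet T) (hab : a ≤ b) (hfg : ∀ s ∈ Ioc a b, ∀ t ∈ T, f (s, t) = g t) :
    ∫ p in Ioc a b ×ˢ T, f p = (∫ t in T, g t) * (b - a) := by
  have hf : EqOn f (fun p => (fun _ => (1 : ℝ)) p.1 * g p.2) (Ioc a b ×ˢ T) := by
    rintro ⟨s, t⟩ ⟨hs, ht⟩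
    simp only [one_mul, hfg s hs t ht]
  rw [setIntegral_congr_fun (measurableSet_Ioc.prod hT) hf, Measure.volume_eq_prod,
    setIntegral_prod_mul (fun _ => (1 : ℝ)) g, setIntegral_const, Real.volume_real_Ioc_of_le hab,
    smul_eq_mul, mul_one, mul_comm]

end SetIntegralProd

@[simp]
theorem Fm_zero (F : ℕ → ℝ) : Fm F 0 = 0 := rfl

@[simp]
theorem Fm_succ (F : ℕ → ℝ) (n : ℕ) : Fm F (n + 1) = F n := rfl

theorem Fm_nonneg {F : ℕ → ℝ} (hF0 : ∀ n, 0 ≤ F n) (n : ℕ) : 0 ≤ Fm F n := by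
  cases n <;> simp [hF0]

theorem Fm_le {F : ℕ → ℝ} (hmono : Monotone F) (hF0 : ∀ n, 0 ≤ F n) (n : ℕ) :
    Fm F n ≤ F n := by
  cases n with
  | zero => exact hF0 0
  | succ n => exact hmono n.le_succ

theorem le_Fm_of_lt {F : ℕ → ℝ} (hmono : Monotone F) {m n : ℕ} (hmn : m < n) :
    F m ≤ Fm F n := by
  obtain ⟨k, rfl⟩ := Nat.exists_eq_add_of_lt hmn
  exact hmono (by omega)

theorem ceilT_eq_Falpha {F : ℕ → ℝ} (hmono : Monotone F) (α : ℝ) {n : ℕ} {s : ℝ}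
    (hs : s ∈ Ioc (Fm F n) (F n)) : ceilT α F s = Falpha α F n := by
  rw [ceilT, tsum_eq_single n, indicator_of_mem hs, mul_one]
  intro m hmn
  rw [indicator_of_notMem, mul_zero]
  rintro ⟨hm_lt, hm_le⟩
  rcases hmn.lt_or_gt with hmn | hnm
  · exact (le_Fm_of_lt hmono hmn).not_gt (hs.1.trans_le hm_le)
  · exact (le_Fm_of_lt hmono hnm).not_gt (hm_lt.trans_le hs.2)

section

variable {d : ℕ} {F : ℕ → ℝ} (hmono : Monotone F) (hF0 : ∀ n, 0 ≤ F n) (α : ℝ)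
  (c : ℝ → (Fin d → ℝ) → ℝ) (v : Fin d → ℝ)

include hmono in
theorem setIntegral_Ioc_prod_ceilT {n : ℕ} {a b : ℝ} (ha : Fm F n ≤ a) (hb : b ≤ F n)
    (hab : a ≤ b) :
    ∫ p in Ioc a b ×ˢ Icc 0 v, c (ceilT α F p.1) p.2 =
      (∫ t in Icc 0 v, c (Falpha α F n) t) * (b - a) :=
  setIntegral_Ioc_prod_of_eqOn_snd measurableSet_Icc hab fun _s hs _t _ => by
    rw [ceilT_eq_Falpha hmono α ⟨ha.trans_lt hs.1, hs.2.trans hb⟩]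

include hmono hF0 in
theorem setIntegral_Ioc_zero_prod_ceilT_eq_add {n : ℕ} {u : ℝ} (hu : u ∈ Icc (Fm F n) (F n))
    (hint : IntegrableOn (fun p : ℝ × (Fin d → ℝ) => c (ceilT α F p.1) p.2)
      (Ioc 0 u ×ˢ Icc 0 v)) :
    ∫ p in Ioc 0 u ×ˢ Icc 0 v, c (ceilT α F p.1) p.2 =
      (∫ p in Ioc 0 (Fm F n) ×ˢ Icc 0 v, c (ceilT α F p.1) p.2) +
        (∫ t in Icc 0 v, c (Falpha α F n) t) * (u - Fm F n) := by
  rw [setIntegral_Ioc_prod_union measurableSet_Icc (Fm_nonneg hF0 n) hu.1 hint,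
    setIntegral_Ioc_prod_ceilT hmono α c v le_rfl hu.2 hu.1]

include hmono hF0 in
theorem setIntegral_Ioc_zero_prod_ceilT (hF1 : ∀ n, F n ≤ 1)
    (hc_int : IntegrableOn (fun p : ℝ × (Fin d → ℝ) => c (ceilT α F p.1) p.2)
      (Icc 0 1 ×ˢ Icc 0 1)) (hv : v ≤ 1) (n : ℕ) :
    ∀ u ∈ Icc (Fm F n) (F n),
      ∫ p in Ioc 0 u ×ˢ Icc 0 v, c (ceilT α F p.1) p.2 =
        (∑ k ∈ Finset.range n, (∫ t in Icc 0 v, c (Falpha α F k) t) * (F k - Fm F k)) +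
        (∫ t in Icc 0 v, c (Falpha α F n) t) * (u - Fm F n) := by
  have hint : ∀ n, ∀ u ∈ Icc (Fm F n) (F n),
      IntegrableOn (fun p : ℝ × (Fin d → ℝ) => c (ceilT α F p.1) p.2) (Ioc 0 u ×ˢ Icc 0 v) :=
    fun n u hu => hc_int.mono_set (prod_mono
      (Ioc_subset_Icc_self.trans (Icc_subset_Icc_right (hu.2.trans (hF1 n))))
      (Icc_subset_Icc_right hv))
  induction n with
  | zero =>
    intro u hu
    simp [setIntegral_Ioc_zero_prod_ceilT_eq_add hmono hF0 α c v hu (hint 0 u hu)]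
  | succ n ih =>
    intro u hu
    rw [setIntegral_Ioc_zero_prod_ceilT_eq_add hmono hF0 α c v hu (hint _ u hu), Fm_succ,
      ih (F n) ⟨Fm_le hmono hF0 n, le_rfl⟩, Finset.sum_range_succ]

end

theorem stmt4_general (d : ℕ) (F : ℕ → ℝ) (hmono : Monotone F) (hF0 : ∀ n, 0 ≤ F n)
    (hF1 : ∀ n, F n ≤ 1)
    (α : ℝ)
    (c : ℝ → (Fin d → ℝ) → ℝ)
    (hc_int : IntegrableOn (fun p : ℝ × (Fin d → ℝ) => c (ceilT α F p.1) p.2)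
      ((Set.Icc (0 : ℝ) 1) ×ˢ (Set.Icc (0 : Fin d → ℝ) 1))) :
    ∀ (n : ℕ), ∀ u ∈ Set.Ioc (Fm F n) (F n), ∀ v ∈ Set.Icc (0 : Fin d → ℝ) 1,
      Qbox d α F c u v =
        (∑ k ∈ Finset.range n,
          (∫ t in Set.Icc (0 : Fin d → ℝ) v, c (Falpha α F k) t) * (F k - Fm F k)) +
        (∫ t in Set.Icc (0 : Fin d → ℝ) v, c (Falpha α F n) t) * (u - Fm F n) := by
  intro n u hu v hv
  rw [Qbox, setIntegral_Icc_prod_eq_Ioc_prod]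
  exact setIntegral_Ioc_zero_prod_ceilT hmono hF0 α c v hF1 hc_int hv.2 n u
    (Ioc_subset_Icc_self hu)

/-- for `u ∈ (F(n-1), F(n)]` and `v ∈ [0,1]^d`,
`𝔔_{α,F,C}(u,v) = Σ_{k<n} ∂₁C(F_α(k),v)·P(N=k) + ∂₁C(F_α(n),v)·(u − F(n−1))`,
where `∂₁C(w,v) = ∫_{[0,v]} c(w,t) dt` and `P(N=k) = F(k) − F(k−1)`. -/
theorem stmt4 (d : ℕ) (F : ℕ → ℝ) (hmono : Monotone F) (hF0 : ∀ n, 0 ≤ F n)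
    (hF1 : ∀ n, F n ≤ 1) (hlim : Tendsto F atTop (nhds 1))
    (α : ℝ) (hα : α ∈ Set.Ioc (0 : ℝ) 1)
    (c : ℝ → (Fin d → ℝ) → ℝ)
    (hc_meas : Measurable (Function.uncurry c))
    (hc_nonneg : ∀ u v, 0 ≤ c u v)
    (hc_int : IntegrableOn (fun p : ℝ × (Fin d → ℝ) => c (ceilT α F p.1) p.2)
      ((Set.Icc (0 : ℝ) 1) ×ˢ (Set.Icc (0 : Fin d → ℝ) 1))) :
    ∀ (n : ℕ), ∀ u ∈ Set.Ioc (Fm F n) (F n), ∀ v ∈ Set.Icc (0 : Fin d → ℝ) 1,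
      Qbox d α F c u v =
        (∑ k ∈ Finset.range n,
          (∫ t in Set.Icc (0 : Fin d → ℝ) v, c (Falpha α F k) t) * (F k - Fm F k)) +
        (∫ t in Set.Icc (0 : Fin d → ℝ) v, c (Falpha α F n) t) * (u - Fm F n) :=
  stmt4_general d F hmono hF0 hF1 α c hc_int
end

section
/- The limiting marginal of the transformed joint distribution satisfies lim_{x→∞} ℌ_{α,F,G,C}(x, y) = E[∂₁C(F_α(N), G(y))] and lim_{y→∞ (componentwise)} ℌ_{α,F,G,C}(x, y) = F(x). -/
open MeasureTheory Set Filter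

/-!
On the strip `(F(n-1), F(n)] × [0,v]` the integrand `c(⌈s⌉, t)` equals `c(F_α(n), t)`, so its
integral there is `(F(n) - F(n-1)) ∫_{[0,v]} c(F_α(n), ·)`. Up to a null set, `[0, F(m)] × [0,v]`
is the disjoint union of the first `m + 1` strips, so `ℌ(x, y)` is a partial sum of the series;
countable additivity of the integral of the integrable density makes the series summable.
As `y → ∞`, `v = G(y)` tends to `1` from below, each `∫_{[0,v]} c(F_α(n), ·)` tends to
`∫_{[0,1]^d} c(F_α(n), ·) = 1` by dominated convergence, and the strip lengths telescope to `F(m)`.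
-/

open Function Topology

section Steps

variable {F : ℕ → ℝ}

@[simp]
lemma fm_zero : Fm F 0 = 0 := if_pos rfl

@[simp]
lemma fm_succ (n : ℕ) : Fm F (n + 1) = F n := if_neg n.succ_ne_zero

lemma fm_nonneg (hF0 : ∀ n, 0 ≤ F n) (n : ℕ) : 0 ≤ Fm F n := by
  cases n <;> simp [hF0]

lemma fm_le_one (hF1 : ∀ n, F n ≤ 1) (n : ℕ) : Fm F n ≤ 1 := by
  cases n <;> simp [hF1]

lemma fm_le_self (hmono : Monotone F) (hF0 : ∀ n, 0 ≤ F n) (n : ℕ) : Fm F n ≤ F n := by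
  cases n with
  | zero => simp [hF0]
  | succ n => simpa using hmono n.le_succ

lemma le_fm_of_lt (hmono : Monotone F) {i j : ℕ} (h : i < j) : F i ≤ Fm F j := by
  obtain ⟨j, rfl⟩ := Nat.exists_eq_add_one_of_ne_zero (Nat.ne_zero_of_lt h)
  simpa using hmono (Nat.le_of_lt_succ h)

lemma falpha_mem_Icc {α : ℝ} (hα : α ∈ Ioc (0 : ℝ) 1) (hF0 : ∀ n, 0 ≤ F n)
    (hF1 : ∀ n, F n ≤ 1) (n : ℕ) : Falpha α F n ∈ Icc (0 : ℝ) 1 := by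
  obtain ⟨hα0, hα1⟩ := hα
  unfold Falpha
  constructor <;> nlinarith [fm_nonneg hF0 n, fm_le_one hF1 n, hF0 n, hF1 n]

lemma sum_range_sub_fm (m : ℕ) : ∑ n ∈ Finset.range (m + 1), (F n - Fm F n) = F m := by
  simpa using Finset.sum_range_sub (Fm F) (m + 1)

lemma pairwise_disjoint_Ioc_fm (hmono : Monotone F) :
    Pairwise (Disjoint on (fun n => Ioc (Fm F n) (F n))) := by
  intro i j hij
  rcases hij.lt_or_gt with h | h
  · exact Ioc_disjoint_Ioc_of_le (le_fm_of_lt hmono h)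
  · exact (Ioc_disjoint_Ioc_of_le (le_fm_of_lt hmono h)).symm

lemma biUnion_range_Ioc_fm (hmono : Monotone F) (hF0 : ∀ n, 0 ≤ F n) (m : ℕ) :
    ⋃ n ∈ Finset.range (m + 1), Ioc (Fm F n) (F n) = Ioc 0 (F m) := by
  induction m with
  | zero => simp
  | succ m ih =>
    rw [Finset.range_add_one, Finset.set_biUnion_insert, ih, fm_succ, union_comm,
      Ioc_union_Ioc_eq_Ioc (hF0 m) (hmono m.le_succ)]

lemma ceilT_eq_falpha {α : ℝ} (hmono : Monotone F) {n : ℕ} {s : ℝ}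
    (hs : s ∈ Ioc (Fm F n) (F n)) : ceilT α F s = Falpha α F n := by
  rw [ceilT, tsum_eq_single n fun k hk => ?_, indicator_of_mem hs, mul_one]
  rw [indicator_of_notMem, mul_zero]
  exact Set.disjoint_left.1 (pairwise_disjoint_Ioc_fm hmono hk.symm) hs

end Steps

section Integrals

variable {E : Type*} [MeasureSpace E] [SFinite (volume : Measure E)]
  {α : ℝ} {F : ℕ → ℝ} {c : ℝ → E → ℝ}

lemma setIntegral_Ioc_fm_prod (hmono : Monotone F) (hF0 : ∀ n, 0 ≤ F n) (n : ℕ) {B : Set E}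
    (hB : MeasurableSet B) :
    ∫ p in Ioc (Fm F n) (F n) ×ˢ B, c (ceilT α F p.1) p.2
      = (∫ t in B, c (Falpha α F n) t) * (F n - Fm F n) := by
  rw [setIntegral_congr_fun (measurableSet_Ioc.prod hB)
      (g := fun p => c (Falpha α F n) p.2) fun p hp => by simp only [ceilT_eq_falpha hmono hp.1],
    Measure.volume_eq_prod, ← Measure.prod_restrict, integral_fun_snd,
    measureReal_restrict_apply_univ, Real.volume_real_Ioc_of_le (fm_le_self hmono hF0 n),
    smul_eq_mul, mul_comm]

lemma hasSum_setIntegral_Ioc_fm_prod (hmono : Monotone F) (hF0 : ∀ n, 0 ≤ F n) {B : Set E}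
    (hB : MeasurableSet B)
    (hint : IntegrableOn (fun p : ℝ × E => c (ceilT α F p.1) p.2)
      (⋃ n, Ioc (Fm F n) (F n) ×ˢ B)) :
    HasSum (fun n => (∫ t in B, c (Falpha α F n) t) * (F n - Fm F n))
      (∫ p in ⋃ n, Ioc (Fm F n) (F n) ×ˢ B, c (ceilT α F p.1) p.2) := by
  simp_rw [← setIntegral_Ioc_fm_prod hmono hF0 _ hB]
  exact hasSum_integral_iUnion (fun n => measurableSet_Ioc.prod hB)
    (fun i j hij => (pairwise_disjoint_Ioc_fm hmono hij).set_prod_left B B) hint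

lemma setIntegral_Icc_prod_eq_sum (hmono : Monotone F) (hF0 : ∀ n, 0 ≤ F n) (m : ℕ)
    {B : Set E} (hB : MeasurableSet B)
    (hint : IntegrableOn (fun p : ℝ × E => c (ceilT α F p.1) p.2) (Icc 0 (F m) ×ˢ B)) :
    ∫ p in Icc 0 (F m) ×ˢ B, c (ceilT α F p.1) p.2
      = ∑ n ∈ Finset.range (m + 1), (∫ t in B, c (Falpha α F n) t) * (F n - Fm F n) := by
  have h_ae : (Icc 0 (F m) ×ˢ B : Set (ℝ × E)) =ᵐ[volume] ⋃ n ∈ Finset.range (m + 1),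
      Ioc (Fm F n) (F n) ×ˢ B := by
    rw [← iUnion₂_prod_const, biUnion_range_Ioc_fm hmono hF0, Measure.volume_eq_prod]
    exact Measure.set_prod_ae_eq Ioc_ae_eq_Icc.symm EventuallyEq.rfl
  have h_int : IntegrableOn (fun p : ℝ × E => c (ceilT α F p.1) p.2)
      (⋃ n ∈ Finset.range (m + 1), Ioc (Fm F n) (F n) ×ˢ B) := hint.congr_set_ae h_ae.symm
  rw [setIntegral_congr_set h_ae, integral_biUnion_finset _ (fun n _ => measurableSet_Ioc.prod hB)
    (fun i _ j _ hij => (pairwise_disjoint_Ioc_fm hmono hij).set_prod_left B B)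
    fun n hn => h_int.mono_set (subset_biUnion_of_mem (u := fun n => Ioc (Fm F n) (F n) ×ˢ B) hn)]
  exact Finset.sum_congr rfl fun n _ => setIntegral_Ioc_fm_prod hmono hF0 n hB

end Integrals

lemma tendsto_setIntegral_Icc_nhdsWithin_Iic {ι : Type*} [Fintype ι] {f : (ι → ℝ) → ℝ}
    {a b : ι → ℝ} (hf : IntegrableOn f (Icc a b)) :
    Tendsto (fun v => ∫ t in Icc a v, f t) (𝓝[≤] b) (𝓝 (∫ t in Icc a b, f t)) := by
  have h_eq : ∀ᶠ v in 𝓝[≤] b,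
      ∫ t in Icc a b, (Icc a v).indicator f t = ∫ t in Icc a v, f t := by
    filter_upwards [self_mem_nhdsWithin] with v hv
    rw [setIntegral_indicator measurableSet_Icc, Icc_inter_Icc, sup_idem, inf_eq_right.2 hv]
  refine Tendsto.congr' h_eq (tendsto_integral_filter_of_dominated_convergence (fun t => ‖f t‖)
    (Eventually.of_forall fun v => hf.aestronglyMeasurable.indicator measurableSet_Icc)
    (Eventually.of_forall fun v => Eventually.of_forall fun t => norm_indicator_le_norm_self _ _)
    hf.norm ?_)
  -- off the null boundary of the box, `t` lies in `Icc a v` for all `v` close to `b`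
  have h_ae : ∀ᵐ t ∂volume.restrict (Icc a b), t ∈ univ.pi fun i => Ioo (a i) (b i) := by
    rw [volume_pi, ← Measure.restrict_congr_set Measure.univ_pi_Ioo_ae_eq_Icc]
    exact ae_restrict_mem (MeasurableSet.univ_pi fun _ => measurableSet_Ioo)
  filter_upwards [h_ae] with t ht
  simp only [mem_univ_pi, mem_Ioo] at ht
  refine tendsto_const_nhds.congr' ?_
  have h_near : ∀ᶠ v in 𝓝 b, ∀ i, t i ≤ v i := eventually_all.2 fun i =>
    ((continuous_apply i).tendsto b).eventually (eventually_ge_nhds (ht i).2)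
  filter_upwards [nhdsWithin_le_nhds h_near] with v hv
  exact (indicator_of_mem (show t ∈ Icc a v from ⟨fun i => (ht i).1.le, hv⟩) f).symm

section Qbox

variable {d : ℕ} {α : ℝ} {F : ℕ → ℝ} {c : ℝ → (Fin d → ℝ) → ℝ}

lemma qbox_eq_sum_range (hmono : Monotone F) (hF0 : ∀ n, 0 ≤ F n) (hF1 : ∀ n, F n ≤ 1)
    (hc_int : IntegrableOn (fun p : ℝ × (Fin d → ℝ) => c (ceilT α F p.1) p.2)
      (Icc (0 : ℝ) 1 ×ˢ Icc (0 : Fin d → ℝ) 1))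
    (m : ℕ) {v : Fin d → ℝ} (hv : v ≤ 1) :
    Qbox d α F c (F m) v
      = ∑ n ∈ Finset.range (m + 1), (∫ t in Icc 0 v, c (Falpha α F n) t) * (F n - Fm F n) :=
  setIntegral_Icc_prod_eq_sum hmono hF0 m measurableSet_Icc
    (hc_int.mono_set (prod_mono (Icc_subset_Icc_right (hF1 m)) (Icc_subset_Icc_right hv)))

lemma tendsto_qbox_atTop (hmono : Monotone F) (hF0 : ∀ n, 0 ≤ F n) (hF1 : ∀ n, F n ≤ 1)
    (hc_int : IntegrableOn (fun p : ℝ × (Fin d → ℝ) => c (ceilT α F p.1) p.2)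
      (Icc (0 : ℝ) 1 ×ˢ Icc (0 : Fin d → ℝ) 1))
    {v : Fin d → ℝ} (hv : v ≤ 1) :
    Tendsto (fun m => Qbox d α F c (F m) v) atTop
      (𝓝 (∑' n, (∫ t in Icc 0 v, c (Falpha α F n) t) * (F n - Fm F n))) := by
  have h_sub : ⋃ n, Ioc (Fm F n) (F n) ×ˢ Icc 0 v ⊆ Icc (0 : ℝ) 1 ×ˢ Icc (0 : Fin d → ℝ) 1 :=
    iUnion_subset fun n => prod_mono
      (fun s hs => ⟨(fm_nonneg hF0 n).trans hs.1.le, hs.2.trans (hF1 n)⟩) (Icc_subset_Icc_right hv)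
  have h_sum := (hasSum_setIntegral_Ioc_fm_prod hmono hF0 measurableSet_Icc
    (hc_int.mono_set h_sub)).summable
  simp_rw [qbox_eq_sum_range hmono hF0 hF1 hc_int _ hv]
  exact h_sum.hasSum.tendsto_sum_nat.comp (tendsto_add_atTop_nat 1)

lemma tendsto_qbox_nhdsWithin_one (hα : α ∈ Ioc (0 : ℝ) 1) (hmono : Monotone F)
    (hF0 : ∀ n, 0 ≤ F n) (hF1 : ∀ n, F n ≤ 1)
    (hc_sec : ∀ u ∈ Icc (0 : ℝ) 1, ∫ v in Icc (0 : Fin d → ℝ) 1, c u v = 1)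
    (hc_int : IntegrableOn (fun p : ℝ × (Fin d → ℝ) => c (ceilT α F p.1) p.2)
      (Icc (0 : ℝ) 1 ×ˢ Icc (0 : Fin d → ℝ) 1)) (m : ℕ) :
    Tendsto (fun v => Qbox d α F c (F m) v) (𝓝[≤] 1) (𝓝 (F m)) := by
  have h_sec : ∀ n, Tendsto (fun v => ∫ t in Icc 0 v, c (Falpha α F n) t) (𝓝[≤] 1) (𝓝 1) :=
    fun n => by
      have h_one := hc_sec _ (falpha_mem_Icc hα hF0 hF1 n)
      rw [← h_one]
      exact tendsto_setIntegral_Icc_nhdsWithin_Iic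
        (Integrable.of_integral_ne_zero (h_one ▸ one_ne_zero))
  have h_sum := tendsto_finsetSum (Finset.range (m + 1)) fun n _ =>
    (h_sec n).mul_const (F n - Fm F n)
  simp only [one_mul, sum_range_sub_fm] at h_sum
  refine h_sum.congr' ?_
  filter_upwards [self_mem_nhdsWithin] with v hv
  exact (qbox_eq_sum_range hmono hF0 hF1 hc_int m hv).symm

end Qbox

theorem stmt15_general (d : ℕ) (F : ℕ → ℝ) (hmono : Monotone F) (hF0 : ∀ n, 0 ≤ F n)
    (hF1 : ∀ n, F n ≤ 1)
    (α : ℝ) (hα : α ∈ Set.Ioc (0 : ℝ) 1)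
    (c : ℝ → (Fin d → ℝ) → ℝ)
    (hc_sec : ∀ u ∈ Set.Icc (0 : ℝ) 1, ∫ v in Set.Icc (0 : Fin d → ℝ) 1, c u v = 1)
    (hc_int : IntegrableOn (fun p : ℝ × (Fin d → ℝ) => c (ceilT α F p.1) p.2)
      ((Set.Icc (0 : ℝ) 1) ×ˢ (Set.Icc (0 : Fin d → ℝ) 1)))
    (G : Fin d → ℝ → ℝ)
    (hG : ∀ i x, G i x ∈ Set.Icc (0 : ℝ) 1)
    (hGlim : ∀ i, Tendsto (G i) atTop (nhds 1)) :
    (∀ y : Fin d → ℝ,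
      Tendsto (fun m : ℕ => Qbox d α F c (F m) (fun i => G i (y i))) atTop
        (nhds (∑' n : ℕ,
          (∫ t in Set.Icc (0 : Fin d → ℝ) (fun i => G i (y i)), c (Falpha α F n) t) *
            (F n - Fm F n)))) ∧
    (∀ m : ℕ,
      Tendsto (fun y : Fin d → ℝ => Qbox d α F c (F m) (fun i => G i (y i))) atTop
        (nhds (F m))) := by
  have hG_le : ∀ y : Fin d → ℝ, (fun i => G i (y i)) ≤ 1 := fun y i => (hG i (y i)).2
  have hG_tendsto : Tendsto (fun y : Fin d → ℝ => fun i => G i (y i)) atTop (𝓝[≤] 1) :=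
    tendsto_nhdsWithin_iff.2 ⟨tendsto_pi_nhds.2 fun i => (hGlim i).comp
      (tendsto_atTop_atTop.2 fun b => ⟨fun _ => b, fun y hy => hy i⟩), Eventually.of_forall hG_le⟩
  exact ⟨fun y => tendsto_qbox_atTop hmono hF0 hF1 hc_int (hG_le y),
    fun m => (tendsto_qbox_nhdsWithin_one hα hmono hF0 hF1 hc_sec hc_int m).comp hG_tendsto⟩

/-- limiting marginals of `ℌ_{α,F,G,C}(x,y) = 𝔔_{α,F,C}(F(x), G(y))`:
as `x → ∞`, `ℌ(x,y) → E[∂₁C(F_α(N), G(y))] = Σ_n (∫_{[0,G(y)]} c(F_α(n),·))·P(N=n)`,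
and as `y → ∞` componentwise, `ℌ(x,y) → F(x)`. -/
theorem stmt15 (d : ℕ) (F : ℕ → ℝ) (hmono : Monotone F) (hF0 : ∀ n, 0 ≤ F n)
    (hF1 : ∀ n, F n ≤ 1) (hlim : Tendsto F atTop (nhds 1))
    (α : ℝ) (hα : α ∈ Set.Ioc (0 : ℝ) 1)
    (c : ℝ → (Fin d → ℝ) → ℝ)
    (hc_meas : Measurable (Function.uncurry c))
    (hc_nonneg : ∀ u v, 0 ≤ c u v)
    (hc_sec : ∀ u ∈ Set.Icc (0 : ℝ) 1, ∫ v in Set.Icc (0 : Fin d → ℝ) 1, c u v = 1)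
    (hc_int : IntegrableOn (fun p : ℝ × (Fin d → ℝ) => c (ceilT α F p.1) p.2)
      ((Set.Icc (0 : ℝ) 1) ×ˢ (Set.Icc (0 : Fin d → ℝ) 1)))
    (G : Fin d → ℝ → ℝ) (hGmono : ∀ i, Monotone (G i))
    (hG : ∀ i x, G i x ∈ Set.Icc (0 : ℝ) 1)
    (hGlim : ∀ i, Tendsto (G i) atTop (nhds 1)) :
    (∀ y : Fin d → ℝ,
      Tendsto (fun m : ℕ => Qbox d α F c (F m) (fun i => G i (y i))) atTop
        (nhds (∑' n : ℕ,
          (∫ t in Set.Icc (0 : Fin d → ℝ) (fun i => G i (y i)), c (Falpha α F n) t) *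
            (F n - Fm F n)))) ∧
    (∀ m : ℕ,
      Tendsto (fun y : Fin d → ℝ => Qbox d α F c (F m) (fun i => G i (y i))) atTop
        (nhds (F m))) :=
  stmt15_general d F hmono hF0 hF1 α hα c hc_sec hc_int G hG hGlim
end
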